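/- arXiv:2204.05411 — 2 statements merged into one kernel-verified Lean document; each statement's English description precedes it below -/
import Mathlib

section
/- (Lemma 1, M=2) Let F̃* ⊆ ℝ² be a finite mutually non-dominated set with |F̃*| ≥ 2, and for k ∈ {1,2} let ε_k be the maximum consecutive gap in the sorted k-th coordinates of F̃*. Then for every f in the non-dominated region of F̃* with f_k ≤ max of the k-th coordinates of F̃* for both k, there exists f* ∈ F̃* with f* ≤ f + ε componentwise, and f* is not unique (at least two such points exist). -/
/-- Maximal gap between consecutive elements of the increasing enumeration of a
finite set of reals. -/
noncomputable def maxGap (s : Finset ℝ) : ℝ :=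
  let L := s.sort (· ≤ ·)
  ((L.zip L.tail).map fun p => p.2 - p.1).foldr max 0

/-!
Take `a ∈ S` with the least first coordinate `≥ f.1`. The largest first coordinate `< f.1`
(it exists: the point of `S` with the largest second coordinate has it `≥ f.2`, so its first
coordinate is `< f.1`) is separated from `a.1` by no other first coordinate, so
`a.1 ≤ f.1 + ε₁`; and `a.2 < f.2` because `f` is not dominated by `a`. Symmetrically there is
`b ∈ S` with `f.2 ≤ b.2 ≤ f.2 + ε₂` and `b.1 < f.1 ≤ a.1`, so `a ≠ b`.
-/

theorem List.Pairwise.mem_zip_tail_of_forall_not_mem_Ioo {α : Type*} [Preorder α]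
    {L : List α} (hL : L.Pairwise (· < ·)) {u v : α} (hu : u ∈ L) (hv : v ∈ L) (huv : u < v)
    (hgap : ∀ w ∈ L, w ∉ Set.Ioo u v) : (u, v) ∈ L.zip L.tail := by
  induction L with
  | nil => simp at hu
  | cons a t ih =>
    obtain ⟨ha, ht⟩ := List.pairwise_cons.1 hL
    cases t with
    | nil => simp_all
    | cons b r =>
      rw [List.tail_cons, List.zip_cons_cons, List.mem_cons]
      by_cases hua : u = a
      · subst hua
        have hvb : v ∈ b :: r := (List.mem_cons.1 hv).resolve_left huv.ne'
        left
        rcases List.mem_cons.1 hvb with rfl | hvr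
        · rfl
        · exact absurd ⟨ha b List.mem_cons_self, (List.pairwise_cons.1 ht).1 v hvr⟩
            (hgap b (by simp))
      · have hut : u ∈ b :: r := (List.mem_cons.1 hu).resolve_left hua
        have hvt : v ∈ b :: r := (List.mem_cons.1 hv).resolve_left
          fun hva => lt_asymm huv (hva ▸ ha u hut)
        exact Or.inr (ih ht hut hvt fun w hw => hgap w (List.mem_cons_of_mem a hw))

theorem sub_le_maxGap (s : Finset ℝ) {u v : ℝ} (hu : u ∈ s) (hv : v ∈ s) (huv : u < v)
    (hgap : ∀ w ∈ s, w ∉ Set.Ioo u v) : v - u ≤ maxGap s := by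
  have hpair : (u, v) ∈ (s.sort (· ≤ ·)).zip (s.sort (· ≤ ·)).tail :=
    s.sortedLT_sort.pairwise.mem_zip_tail_of_forall_not_mem_Ioo ((s.mem_sort _).2 hu)
      ((s.mem_sort _).2 hv) huv fun w hw => hgap w ((s.mem_sort _).1 hw)
  exact List.le_max_of_le' 0 (List.mem_map_of_mem (f := fun p : ℝ × ℝ => p.2 - p.1) hpair)
    le_rfl

theorem exists_mem_le_le_add_maxGap (s : Finset ℝ) {t : ℝ} (hlo : ∃ x ∈ s, x < t)
    (hhi : ∃ x ∈ s, t ≤ x) : ∃ x ∈ s, t ≤ x ∧ x ≤ t + maxGap s := by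
  classical
  obtain ⟨u, hu, hu_max⟩ :=
    Finset.exists_max_image (s.filter (· < t)) id (Finset.filter_nonempty_iff.2 hlo)
  obtain ⟨v, hv, hv_min⟩ :=
    Finset.exists_min_image (s.filter (t ≤ ·)) id (Finset.filter_nonempty_iff.2 hhi)
  rw [Finset.mem_filter] at hu hv
  refine ⟨v, hv.1, hv.2, ?_⟩
  have hgap : ∀ w ∈ s, w ∉ Set.Ioo u v := by
    rintro w hw ⟨huw, hwv⟩
    rcases lt_or_ge w t with hwt | htw
    · exact huw.not_ge (hu_max w (Finset.mem_filter.2 ⟨hw, hwt⟩))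
    · exact hwv.not_ge (hv_min w (Finset.mem_filter.2 ⟨hw, htw⟩))
  linarith [sub_le_maxGap s hu.1 hv.1 (hu.2.trans_le hv.2) hgap]

theorem stmt_9_general (S : Finset (ℝ × ℝ)) (hne : S.Nonempty)
    (ε₁ ε₂ : ℝ)
    (hε₁ : ε₁ = maxGap (S.image Prod.fst))
    (hε₂ : ε₂ = maxGap (S.image Prod.snd))
    (f : ℝ × ℝ)
    (hfA : ¬∃ g ∈ S, f.1 ≤ g.1 ∧ f.2 ≤ g.2)
    (hf1 : f.1 ≤ (S.image Prod.fst).max' (hne.image Prod.fst))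
    (hf2 : f.2 ≤ (S.image Prod.snd).max' (hne.image Prod.snd)) :
    ∃ a ∈ S, ∃ b ∈ S, a ≠ b ∧
      a.1 ≤ f.1 + ε₁ ∧ a.2 ≤ f.2 + ε₂ ∧ b.1 ≤ f.1 + ε₁ ∧ b.2 ≤ f.2 + ε₂ := by
  push Not at hfA
  have hfA' : ∀ g ∈ S, f.2 ≤ g.2 → g.1 < f.1 := fun g hg h2 =>
    lt_of_not_ge fun h1 => (hfA g hg h1).not_ge h2
  obtain ⟨gx, hgxS, hgx⟩ := Finset.mem_image.1 ((S.image Prod.fst).max'_mem (hne.image _))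
  obtain ⟨gy, hgyS, hgy⟩ := Finset.mem_image.1 ((S.image Prod.snd).max'_mem (hne.image _))
  obtain ⟨_, hxS, hfx, hxε⟩ := exists_mem_le_le_add_maxGap (S.image Prod.fst)
    ⟨gy.1, Finset.mem_image_of_mem _ hgyS, hfA' gy hgyS (hgy ▸ hf2)⟩
    ⟨gx.1, Finset.mem_image_of_mem _ hgxS, hgx ▸ hf1⟩
  obtain ⟨_, hyS, hfy, hyε⟩ := exists_mem_le_le_add_maxGap (S.image Prod.snd)
    ⟨gx.2, Finset.mem_image_of_mem _ hgxS, hfA gx hgxS (hgx ▸ hf1)⟩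
    ⟨gy.2, Finset.mem_image_of_mem _ hgyS, hgy ▸ hf2⟩
  obtain ⟨a, haS, rfl⟩ := Finset.mem_image.1 hxS
  obtain ⟨b, hbS, rfl⟩ := Finset.mem_image.1 hyS
  have ha2 := hfA a haS hfx
  have hb1 := hfA' b hbS hfy
  refine ⟨a, haS, b, hbS, fun hab => (hab ▸ hb1).not_ge hfx, ?_, ?_, ?_, ?_⟩ <;> linarith

/-- Lemma 1 (M = 2): for every point `f` of the non-dominated region of a finite
mutually non-dominated set `S`, with coordinates below the coordinate-wise maxima
of `S`, there exist at least two distinct points of `S` below `f + ε` componentwise,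
where `ε` is the vector of maximal consecutive coordinate gaps. -/
theorem stmt_9 (S : Finset (ℝ × ℝ)) (hcard : 2 ≤ S.card) (hne : S.Nonempty)
    (hnd : ∀ f ∈ S, ∀ f' ∈ S, f ≠ f' → ¬(f'.1 ≤ f.1 ∧ f'.2 ≤ f.2))
    (ε₁ ε₂ : ℝ)
    (hε₁ : ε₁ = maxGap (S.image Prod.fst))
    (hε₂ : ε₂ = maxGap (S.image Prod.snd))
    (f : ℝ × ℝ)
    (hfA : ¬∃ g ∈ S, f.1 ≤ g.1 ∧ f.2 ≤ g.2)
    (hf1 : f.1 ≤ (S.image Prod.fst).max' (hne.image Prod.fst))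
    (hf2 : f.2 ≤ (S.image Prod.snd).max' (hne.image Prod.snd)) :
    ∃ a ∈ S, ∃ b ∈ S, a ≠ b ∧
      a.1 ≤ f.1 + ε₁ ∧ a.2 ≤ f.2 + ε₂ ∧ b.1 ≤ f.1 + ε₁ ∧ b.2 ≤ f.2 + ε₂ :=
  stmt_9_general S hne ε₁ ε₂ hε₁ hε₂ f hfA hf1 hf2
end

section
/- (Lemma 2, M=2) Let F be a (continuous) Pareto frontier in ℝ² and F̃ ⊆ F a finite subset containing, for each k, a point achieving max over F of the k-th coordinate, with |F̃| ≥ 2. Let ε_t be the vector of maximum consecutive coordinate gaps of F̃. Then the non-dominated region of the shifted set F̃ + ε_t is contained in the non-dominated region of F: Ã(F̃_{ε_t}) ⊆ A(F). -/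
namespace List

noncomputable def maxGap (L : List ℝ) : ℝ :=
  ((L.zip L.tail).map fun p => p.2 - p.1).foldr max 0

theorem maxGap_cons_cons (a b : ℝ) (t : List ℝ) :
    (a :: b :: t).maxGap = max (b - a) (b :: t).maxGap := rfl

theorem maxGap_nonneg : ∀ L : List ℝ, 0 ≤ L.maxGap
  | [] => le_rfl
  | [_] => le_rfl
  | a :: b :: t => by
    rw [maxGap_cons_cons]
    exact (maxGap_nonneg (b :: t)).trans (le_max_right _ _)

theorem maxGap_le_maxGap_cons (a : ℝ) : ∀ L : List ℝ, L.maxGap ≤ (a :: L).maxGap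
  | [] => le_rfl
  | b :: t => by
    rw [maxGap_cons_cons]
    exact le_max_right _ _

theorem exists_lt_le_add_maxGap {x c : ℝ} :
    ∀ {a : ℝ} {L : List ℝ}, a < x → c ∈ L → x ≤ c →
      ∃ a' ∈ a :: L, a' < x ∧ x ≤ a' + (a :: L).maxGap
  | _, [], _, hc, _ => absurd hc not_mem_nil
  | a, b :: t, hax, hc, hxc => by
    by_cases hxb : x ≤ b
    · refine ⟨a, mem_cons_self, hax, ?_⟩
      rw [maxGap_cons_cons]
      linarith [le_max_left (b - a) (b :: t).maxGap]
    · have hct : c ∈ t := by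
        rcases mem_cons.mp hc with rfl | hct
        · exact absurd hxc hxb
        · exact hct
      obtain ⟨a', ha', ha'x, hxa'⟩ := exists_lt_le_add_maxGap (not_le.mp hxb) hct hxc
      exact ⟨a', mem_cons_of_mem _ ha', ha'x,
        hxa'.trans (by linarith [maxGap_le_maxGap_cons a (b :: t)])⟩

end List

theorem maxGap_eq_sort (s : Finset ℝ) : maxGap s = (s.sort (· ≤ ·)).maxGap := rfl

theorem maxGap_nonneg (s : Finset ℝ) : 0 ≤ maxGap s :=
  (maxGap_eq_sort s).symm ▸ List.maxGap_nonneg _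

theorem exists_mem_lt_le_add_maxGap {s : Finset ℝ} {a c x : ℝ} (ha : a ∈ s) (hax : a < x)
    (hc : c ∈ s) (hxc : x ≤ c) : ∃ a' ∈ s, a' < x ∧ x ≤ a' + maxGap s := by
  rw [maxGap_eq_sort]
  have hsorted := s.pairwise_sort (· ≤ ·)
  have ha : a ∈ s.sort (· ≤ ·) := (s.mem_sort _).mpr ha
  have hc : c ∈ s.sort (· ≤ ·) := (s.mem_sort _).mpr hc
  obtain ⟨m, t, hmt⟩ : ∃ m t, s.sort (· ≤ ·) = m :: t :=
    List.exists_cons_of_ne_nil (List.ne_nil_of_mem ha)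
  rw [hmt] at hsorted ha hc
  have hmx : m < x := by
    rcases List.mem_cons.mp ha with rfl | hat
    · exact hax
    · exact ((List.pairwise_cons.mp hsorted).1 a hat).trans_lt hax
  have hct : c ∈ t := by
    rcases List.mem_cons.mp hc with rfl | hct
    · exact absurd hxc (not_le.mpr hmx)
    · exact hct
  obtain ⟨a', ha', ha'x, hxa'⟩ := List.exists_lt_le_add_maxGap hmx hct hxc
  rw [← hmt] at ha'
  exact ⟨a', (s.mem_sort _).mp ha', ha'x, hmt ▸ hxa'⟩

theorem snd_lt_of_fst_lt_of_nondominated {F : Set (ℝ × ℝ)}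
    (hndF : ∀ f ∈ F, ∀ f' ∈ F, f ≠ f' → ¬(f'.1 ≤ f.1 ∧ f'.2 ≤ f.2))
    {s t : ℝ × ℝ} (hs : s ∈ F) (ht : t ∈ F) (hts : t.1 < s.1) : s.2 < t.2 := by
  have hst : s ≠ t := fun h => hts.ne (h ▸ rfl)
  exact not_le.mp fun h => hndF s hs t ht hst ⟨hts.le, h⟩

theorem exists_mem_le_add_maxGap_of_mem {F : Set (ℝ × ℝ)}
    (hndF : ∀ f ∈ F, ∀ f' ∈ F, f ≠ f' → ¬(f'.1 ≤ f.1 ∧ f'.2 ≤ f.2))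
    {Ftil : Finset (ℝ × ℝ)} (hsub : ↑Ftil ⊆ F)
    (hmax1 : ∃ f ∈ Ftil, ∀ g ∈ F, g.1 ≤ f.1) (hmax2 : ∃ f ∈ Ftil, ∀ g ∈ F, g.2 ≤ f.2)
    {s : ℝ × ℝ} (hs : s ∈ F) :
    ∃ t ∈ Ftil, s.1 ≤ t.1 + maxGap (Ftil.image Prod.fst) ∧
      s.2 ≤ t.2 + maxGap (Ftil.image Prod.snd) := by
  have hε₁ := maxGap_nonneg (Ftil.image Prod.fst)
  have hε₂ := maxGap_nonneg (Ftil.image Prod.snd)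
  by_cases hleft : ∃ u ∈ Ftil, u.1 < s.1
  · obtain ⟨u, hu, hus⟩ := hleft
    obtain ⟨r, hr, hrmax⟩ := hmax1
    obtain ⟨a, ha, has, hsa⟩ := exists_mem_lt_le_add_maxGap
      (Finset.mem_image_of_mem Prod.fst hu) hus (Finset.mem_image_of_mem Prod.fst hr) (hrmax s hs)
    obtain ⟨t, ht, rfl⟩ := Finset.mem_image.mp ha
    have hst := snd_lt_of_fst_lt_of_nondominated hndF hs (hsub ht) has
    exact ⟨t, ht, hsa, by linarith⟩
  · push Not at hleft
    obtain ⟨t, ht, htmax⟩ := hmax2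
    exact ⟨t, ht, by linarith [hleft t ht], by linarith [htmax s hs]⟩

theorem stmt_10_general (F : Set (ℝ × ℝ))
    (hndF : ∀ f ∈ F, ∀ f' ∈ F, f ≠ f' → ¬(f'.1 ≤ f.1 ∧ f'.2 ≤ f.2))
    (Ftil : Finset (ℝ × ℝ)) (hsub : ↑Ftil ⊆ F)
    (hmax1 : ∃ f ∈ Ftil, ∀ g ∈ F, g.1 ≤ f.1)
    (hmax2 : ∃ f ∈ Ftil, ∀ g ∈ F, g.2 ≤ f.2)
    (ε₁ ε₂ : ℝ)
    (hε₁ : ε₁ = maxGap (Ftil.image Prod.fst))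
    (hε₂ : ε₂ = maxGap (Ftil.image Prod.snd)) :
    {f : ℝ × ℝ | ¬∃ s ∈ Ftil, f.1 ≤ s.1 + ε₁ ∧ f.2 ≤ s.2 + ε₂} ⊆
      {f : ℝ × ℝ | ¬∃ s ∈ F, f.1 ≤ s.1 ∧ f.2 ≤ s.2} := by
  subst hε₁ hε₂
  rintro f hf ⟨s, hs, hfs₁, hfs₂⟩
  obtain ⟨t, ht, hst₁, hst₂⟩ := exists_mem_le_add_maxGap_of_mem hndF hsub hmax1 hmax2 hs
  exact hf ⟨t, ht, hfs₁.trans hst₁, hfs₂.trans hst₂⟩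

/-- Lemma 2 (M = 2): if the finite approximation `F̃` of a Pareto frontier `F`
contains the coordinate-wise maxima of `F`, then the non-dominated region of the
shifted set `F̃ + ε_t` is contained in the non-dominated region of `F`, where
`ε_t` is the vector of maximal consecutive coordinate gaps of `F̃`. -/
theorem stmt_10 (F : Set (ℝ × ℝ))
    (hndF : ∀ f ∈ F, ∀ f' ∈ F, f ≠ f' → ¬(f'.1 ≤ f.1 ∧ f'.2 ≤ f.2))
    (Ftil : Finset (ℝ × ℝ)) (hsub : ↑Ftil ⊆ F) (hcard : 2 ≤ Ftil.card)
    (hmax1 : ∃ f ∈ Ftil, ∀ g ∈ F, g.1 ≤ f.1)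
    (hmax2 : ∃ f ∈ Ftil, ∀ g ∈ F, g.2 ≤ f.2)
    (ε₁ ε₂ : ℝ)
    (hε₁ : ε₁ = maxGap (Ftil.image Prod.fst))
    (hε₂ : ε₂ = maxGap (Ftil.image Prod.snd)) :
    {f : ℝ × ℝ | ¬∃ s ∈ Ftil, f.1 ≤ s.1 + ε₁ ∧ f.2 ≤ s.2 + ε₂} ⊆
      {f : ℝ × ℝ | ¬∃ s ∈ F, f.1 ≤ s.1 ∧ f.2 ≤ s.2} :=
  stmt_10_general F hndF Ftil hsub hmax1 hmax2 ε₁ ε₂ hε₁ hε₂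
end
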